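/- Let A = [a_ij] ∈ ℂ^{n×n}, n ≥ 2, be a DD matrix. Then A is an H-matrix if and only if T(A) = ∅, or both (i) the principal submatrix A|_{T(A)²} is an H-matrix and (ii) for every j ∈ N \ T(A), ‖ℳ(A|_{T(A)²})^{-1} · r^{T̄}(A)‖_∞ · r_j^{T(A)}(A) < |a_jj| − r_j^{N \ T(A)}(A), where r^{T̄}(A) is the vector with components r_i^{N \ T(A)}(A) for i ∈ T(A). -/

import Mathlib

open scoped BigOperators

noncomputable section

/-- Deleted `i`-th row sum of `|A|`, restricted to the index set `S`
    (i.e. `r_i^S(A) = ∑_{j ∈ S \ {i}} |a_{ij}|`). -/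
def rowSumOn {ι : Type*} [Fintype ι] [DecidableEq ι]
    (A : Matrix ι ι ℂ) (S : Finset ι) (i : ι) : ℝ :=
  ∑ j ∈ S.erase i, ‖A i j‖

/-- Deleted `i`-th row sum `r_i(A) = ∑_{j ≠ i} |a_{ij}|`. -/
def rowSum {ι : Type*} [Fintype ι] [DecidableEq ι]
    (A : Matrix ι ι ℂ) (i : ι) : ℝ :=
  rowSumOn A Finset.univ i

/-- `A` is strictly diagonally dominant (SDD). -/
def IsSDD {ι : Type*} [Fintype ι] [DecidableEq ι] (A : Matrix ι ι ℂ) : Prop :=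
  ∀ i, rowSum A i < ‖A i i‖

/-- `A` is diagonally dominant (DD). -/
def IsDD {ι : Type*} [Fintype ι] [DecidableEq ι] (A : Matrix ι ι ℂ) : Prop :=
  ∀ i, rowSum A i ≤ ‖A i i‖

/-- `A` is DD+ : diagonally dominant with at least one strictly dominant row. -/
def IsDDplus {ι : Type*} [Fintype ι] [DecidableEq ι] (A : Matrix ι ι ℂ) : Prop :=
  IsDD A ∧ ∃ i, rowSum A i < ‖A i i‖

/-- `A` is an H-matrix: there is a diagonal matrix `D` with positive diagonal
    entries such that `A * D` is SDD. -/
def IsHMatrix {ι : Type*} [Fintype ι] [DecidableEq ι] (A : Matrix ι ι ℂ) : Prop :=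
  ∃ d : ι → ℝ, (∀ i, 0 < d i) ∧ IsSDD (A * Matrix.diagonal fun i => (d i : ℂ))

/-- `T(A)`: the set of indices of non-SDD rows of `A`. -/
def TSet {ι : Type*} [Fintype ι] [DecidableEq ι] (A : Matrix ι ι ℂ) : Finset ι :=
  Finset.univ.filter fun i => ‖A i i‖ ≤ rowSum A i

/-- The principal submatrix `A|_{M²}` of `A` corresponding to the index set `M`. -/
def subMat {ι : Type*} [Fintype ι] [DecidableEq ι]
    (A : Matrix ι ι ℂ) (M : Finset ι) : Matrix {i // i ∈ M} {i // i ∈ M} ℂ :=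
  Matrix.of fun i j => A i.val j.val

/-- There exists a nonzero elements chain `a_{i₀i₁}, a_{i₁i₂}, …, a_{i_{r-1}i_r}`
    starting at `i₀` and ending at some `i_r ∉ T(A)`. -/
def HasChainOut {ι : Type*} [Fintype ι] [DecidableEq ι]
    (A : Matrix ι ι ℂ) (i₀ : ι) : Prop :=
  ∃ (r : ℕ) (c : Fin (r + 1) → ι), 0 < r ∧ c 0 = i₀ ∧
    (∀ k : Fin r, A (c k.castSucc) (c k.succ) ≠ 0) ∧ c (Fin.last r) ∉ TSet A

/-- `S` is an interwoven set of indices for `A`: `S` is a proper subset of `N`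
    and either `|S| ≤ 1`, or `|S| = s > 1` and there exist distinct
    `p₁,…,p_{s-1} ∈ S` and `q₁,…,q_{s-1}` with `q₁ ∈ N \ S`, `a_{p₁q₁} ≠ 0`, and
    `q_i ∈ (N \ S) ∪ {p₁,…,p_{i-1}}`, `a_{p_iq_i} ≠ 0` for `i = 2,…,s-1`. -/
def Interwoven {ι : Type*} [Fintype ι] [DecidableEq ι]
    (A : Matrix ι ι ℂ) (S : Finset ι) : Prop :=
  S ⊂ Finset.univ ∧
    (S.card ≤ 1 ∨
      (1 < S.card ∧ ∃ p q : Fin (S.card - 1) → ι,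
        Function.Injective p ∧ (∀ i, p i ∈ S) ∧
        ∀ i, A (p i) (q i) ≠ 0 ∧ (q i ∉ S ∨ ∃ j, j < i ∧ q i = p j)))

/-- The comparison matrix `ℳ(A)`. -/
def CompMat {ι : Type*} [Fintype ι] [DecidableEq ι] (A : Matrix ι ι ℂ) : Matrix ι ι ℝ :=
  Matrix.of fun i j => if i = j then ‖A i i‖ else -‖A i j‖


/-!
Under diagonal dominance the rows indexed by `T(A)` are exactly the rows with
`|a_ii| = r_i(A)`, so `ℳ(A|_{T(A)²}) 𝟙 = r^{T̄}(A)`. Hence whenever `ℳ(A|_{T(A)²})` is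
invertible the vector in condition (ii) is `𝟙`, and (ii) just says that the rows outside
`T(A)` are strictly dominant, which they are by definition of `T(A)`. The theorem thus
reduces to: a DD matrix is an H-matrix iff `A|_{T(A)²}` is one. Restricting a scaling to
`T(A)` gives one direction. Conversely, if `y` scales `A|_{T(A)²}` to an SDD matrix, the
scaling `1 + ε y` (with `y` extended by `0`) makes the rows in `T(A)` strict, and keeps
the already strict rows strict for `ε` small.
-/

open Finset Matrix Filter Topology

section HMatrix

variable {ι : Type*} [Fintype ι] [DecidableEq ι]

lemma mem_TSet {A : Matrix ι ι ℂ} {i : ι} : i ∈ TSet A ↔ ‖A i i‖ ≤ rowSum A i := by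
  simp [TSet]

lemma notMem_TSet {A : Matrix ι ι ℂ} {i : ι} : i ∉ TSet A ↔ rowSum A i < ‖A i i‖ := by
  rw [mem_TSet, not_le]

lemma rowSumOn_add_rowSumOn_compl (A : Matrix ι ι ℂ) (S : Finset ι) (i : ι) :
    rowSumOn A S i + rowSumOn A Sᶜ i = rowSum A i := by
  rw [rowSum, rowSumOn, rowSumOn, rowSumOn, ← sum_union
    (disjoint_compl_right.mono (erase_subset _ _) (erase_subset _ _)),
    ← erase_union_distrib, union_compl]

lemma rowSumOn_nonneg (A : Matrix ι ι ℂ) (S : Finset ι) (i : ι) : 0 ≤ rowSumOn A S i :=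
  sum_nonneg fun _ _ => norm_nonneg _

omit [Fintype ι] in
lemma sum_univ_erase_subtype (S : Finset ι) (f : ι → ℝ) (i : S) :
    ∑ j ∈ univ.erase i, f j = ∑ j ∈ S.erase i, f j := by
  rw [sum_erase_eq_sub (mem_univ i), sum_erase_eq_sub i.2, sum_coe_sort S f]

lemma norm_mul_diagonal_apply (A : Matrix ι ι ℂ) {d : ι → ℝ} (i : ι) {j : ι}
    (hd : 0 ≤ d j) : ‖(A * diagonal fun k => (d k : ℂ)) i j‖ = ‖A i j‖ * d j := by
  rw [mul_diagonal, norm_mul, Complex.norm_real, Real.norm_of_nonneg hd]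

lemma isHMatrix_iff {A : Matrix ι ι ℂ} : IsHMatrix A ↔
    ∃ d : ι → ℝ, (∀ i, 0 < d i) ∧ ∀ i, ∑ j ∈ univ.erase i, ‖A i j‖ * d j < ‖A i i‖ * d i := by
  refine exists_congr fun d => and_congr_right fun hd => forall_congr' fun i => ?_
  simp only [rowSum, rowSumOn, norm_mul_diagonal_apply A i (hd _).le]

lemma IsHMatrix.subMat {A : Matrix ι ι ℂ} (hA : IsHMatrix A) (S : Finset ι) :
    IsHMatrix (subMat A S) := by
  obtain ⟨d, hd, hdom⟩ := isHMatrix_iff.1 hA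
  refine isHMatrix_iff.2 ⟨fun i => d i, fun i => hd i, fun i => ?_⟩
  calc ∑ j ∈ univ.erase i, ‖A i j‖ * d j
      = ∑ j ∈ S.erase i, ‖A i j‖ * d j := sum_univ_erase_subtype S (fun j => ‖A i j‖ * d j) i
    _ ≤ ∑ j ∈ univ.erase i.1, ‖A i j‖ * d j :=
        sum_le_sum_of_subset_of_nonneg (erase_subset_erase _ (subset_univ _))
          fun j _ _ => mul_nonneg (norm_nonneg _) (hd j).le
    _ < ‖A i i‖ * d i := hdom i

lemma IsHMatrix.of_isEmpty [IsEmpty ι] (A : Matrix ι ι ℂ) : IsHMatrix A :=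
  ⟨fun _ => 1, isEmptyElim, isEmptyElim⟩

lemma norm_compMat_apply (A : Matrix ι ι ℂ) (i j : ι) : ‖CompMat A i j‖ = ‖A i j‖ := by
  by_cases h : i = j
  · subst h; simp [CompMat]
  · simp [CompMat, h]

lemma IsHMatrix.isUnit_det_compMat {A : Matrix ι ι ℂ} (hA : IsHMatrix A) :
    IsUnit (CompMat A).det := by
  obtain ⟨d, hd, hdom⟩ := isHMatrix_iff.1 hA
  have hnorm : ∀ i j, ‖(CompMat A * diagonal d) i j‖ = ‖A i j‖ * d j := fun i j => by
    rw [mul_diagonal, norm_mul, norm_compMat_apply, Real.norm_of_nonneg (hd j).le]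
  have hdet : (CompMat A * diagonal d).det ≠ 0 :=
    det_ne_zero_of_sum_row_lt_diag fun i => by simpa only [hnorm] using hdom i
  rw [det_mul] at hdet
  exact isUnit_iff_ne_zero.2 (left_ne_zero_of_mul hdet)

lemma compMat_subMat_mulVec_one_apply (A : Matrix ι ι ℂ) (S : Finset ι) (i : S) :
    (CompMat (subMat A S) *ᵥ 1) i = ‖A i i‖ - rowSumOn A S i := by
  have hoff : ∑ j ∈ univ.erase i, CompMat (subMat A S) i j = -rowSumOn A S i := by
    rw [rowSumOn, ← sum_univ_erase_subtype S _ i, ← sum_neg_distrib]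
    refine sum_congr rfl fun j hj => ?_
    simp [CompMat, subMat, (ne_of_mem_erase hj).symm]
  simp only [mulVec, dotProduct, Pi.one_apply, mul_one]
  rw [← add_sum_erase _ _ (mem_univ i), hoff]
  simp [CompMat, subMat, sub_eq_add_neg]

lemma IsDD.compMat_subMat_TSet_mulVec_one {A : Matrix ι ι ℂ} (hDD : IsDD A) :
    CompMat (subMat A (TSet A)) *ᵥ 1 = fun i : {i // i ∈ TSet A} => rowSumOn A (TSet A)ᶜ i := by
  funext i
  rw [compMat_subMat_mulVec_one_apply, le_antisymm (mem_TSet.1 i.2) (hDD i),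
    ← rowSumOn_add_rowSumOn_compl A (TSet A)]
  ring

lemma IsDD.compMat_subMat_TSet_inv_mulVec {A : Matrix ι ι ℂ} (hDD : IsDD A)
    (hT : IsHMatrix (subMat A (TSet A))) :
    (CompMat (subMat A (TSet A)))⁻¹ *ᵥ (fun i : {i // i ∈ TSet A} => rowSumOn A (TSet A)ᶜ i)
      = 1 := by
  rw [← hDD.compMat_subMat_TSet_mulVec_one, mulVec_mulVec,
    nonsing_inv_mul _ hT.isUnit_det_compMat, one_mulVec]

lemma sum_univ_erase_subtype_eq_sum_dite (S : Finset ι) (f : ι → ℝ) (y : S → ℝ) (i : S) :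
    ∑ j ∈ univ.erase i, f j * y j
      = ∑ j ∈ univ.erase i.1, f j * (if h : j ∈ S then y ⟨j, h⟩ else 0) := by
  have hout : ∀ j ∈ univ.erase i.1, j ∉ S.erase i.1 →
      f j * (if h : j ∈ S then y ⟨j, h⟩ else 0) = 0 := fun j hj hjS => by
    simp [show j ∉ S from fun h => hjS (mem_erase.2 ⟨ne_of_mem_erase hj, h⟩)]
  rw [← sum_subset (erase_subset_erase _ (subset_univ _)) hout,
    ← sum_univ_erase_subtype S _ i]
  simp

lemma IsDD.isHMatrix_of_nonneg_weight {A : Matrix ι ι ℂ} (hDD : IsDD A) {y : ι → ℝ}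
    (hy : ∀ j, 0 ≤ y j)
    (hdom : ∀ i, rowSum A i < ‖A i i‖ ∨ ∑ j ∈ univ.erase i, ‖A i j‖ * y j < ‖A i i‖ * y i) :
    IsHMatrix A := by
  have hsplit : ∀ i (ε : ℝ), ∑ j ∈ univ.erase i, ‖A i j‖ * (1 + ε * y j)
      = rowSum A i + ε * ∑ j ∈ univ.erase i, ‖A i j‖ * y j := fun i ε => by
    simp only [rowSum, rowSumOn, mul_add, mul_one, sum_add_distrib, mul_sum]
    exact congrArg _ (sum_congr rfl fun j _ => by ring)
  have hrow : ∀ i, ∀ᶠ ε in 𝓝[>] (0 : ℝ),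
      ∑ j ∈ univ.erase i, ‖A i j‖ * (1 + ε * y j) < ‖A i i‖ * (1 + ε * y i) := fun i => by
    rcases hdom i with hstrict | hweight
    · have hlim : Tendsto (fun ε : ℝ => rowSum A i + ε * ∑ j ∈ univ.erase i, ‖A i j‖ * y j)
          (𝓝[>] 0) (𝓝 (rowSum A i)) := by
        refine Tendsto.mono_left (Continuous.tendsto' ?_ _ _ ?_) nhdsWithin_le_nhds
        · fun_prop
        · rw [zero_mul, add_zero]
      filter_upwards [hlim.eventually_lt_const hstrict, self_mem_nhdsWithin]
        with ε hε (hε0 : 0 < ε)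
      rw [hsplit]
      nlinarith [mul_nonneg (norm_nonneg (A i i)) (mul_nonneg hε0.le (hy i))]
    · filter_upwards [self_mem_nhdsWithin] with ε (hε : 0 < ε)
      rw [hsplit]
      nlinarith [hDD i, mul_lt_mul_of_pos_left hweight hε]
  obtain ⟨ε, hdomε, hε⟩ := ((eventually_all.2 hrow).and self_mem_nhdsWithin).exists
  exact isHMatrix_iff.2 ⟨fun j => 1 + ε * y j,
    fun j => by have : 0 < ε := hε; have := hy j; positivity, hdomε⟩

lemma IsDD.isHMatrix_of_isHMatrix_subMat {A : Matrix ι ι ℂ} (hDD : IsDD A) {S : Finset ι}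
    (hS : ∀ i ∉ S, rowSum A i < ‖A i i‖) (hsub : IsHMatrix (subMat A S)) : IsHMatrix A := by
  obtain ⟨y, hy, hdom⟩ := isHMatrix_iff.1 hsub
  refine hDD.isHMatrix_of_nonneg_weight (y := fun j => if h : j ∈ S then y ⟨j, h⟩ else 0)
    (fun j => by split_ifs; exacts [(hy _).le, le_rfl]) fun i => ?_
  by_cases hi : i ∈ S
  · right
    rw [← sum_univ_erase_subtype_eq_sum_dite S _ y ⟨i, hi⟩, dif_pos hi]
    exact hdom ⟨i, hi⟩
  · exact .inl (hS i hi)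

end HMatrix

theorem huang_characterization_general (n : ℕ)
    (A : Matrix (Fin n) (Fin n) ℂ) (hDD : IsDD A) :
    IsHMatrix A ↔
      (TSet A = ∅ ∨
        (IsHMatrix (subMat A (TSet A)) ∧
          ∀ j ∉ TSet A,
            ‖Matrix.mulVec (CompMat (subMat A (TSet A)))⁻¹
                (fun i : {i // i ∈ TSet A} => rowSumOn A (TSet A)ᶜ i.val)‖ *
              rowSumOn A (TSet A) j <
            ‖A j j‖ - rowSumOn A (TSet A)ᶜ j)) := by
  constructor
  · intro hA
    have hT := hA.subMat (TSet A)
    refine Or.inr ⟨hT, fun j hj => ?_⟩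
    rw [hDD.compMat_subMat_TSet_inv_mulVec hT]
    have hone : ‖(1 : {i // i ∈ TSet A} → ℝ)‖ ≤ 1 := (pi_norm_const_le (1 : ℝ)).trans norm_one.le
    have hdom := notMem_TSet.1 hj
    rw [← rowSumOn_add_rowSumOn_compl A (TSet A)] at hdom
    linarith [mul_le_of_le_one_left (rowSumOn_nonneg A (TSet A) j) hone]
  · intro h
    refine hDD.isHMatrix_of_isHMatrix_subMat (fun i => notMem_TSet.1) ?_
    rcases h with hT | ⟨hT, -⟩
    · have : IsEmpty {i // i ∈ TSet A} := ⟨fun i => by simpa [hT] using i.2⟩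
      exact .of_isEmpty _
    · exact hT

/-- Huang's characterization. A DD matrix `A ∈ ℂⁿˣⁿ`, `n ≥ 2`,
is an H-matrix iff `T(A) = ∅`, or `A|_{T(A)²}` is an H-matrix and
`‖ℳ(A|_{T(A)²})⁻¹ ⬝ r^{T̄}(A)‖_∞ ⬝ r_j^{T(A)}(A) < |a_jj| − r_j^{T̄}(A)` for
every `j ∉ T(A)`. -/
theorem huang_characterization (n : ℕ) (hn : 2 ≤ n)
    (A : Matrix (Fin n) (Fin n) ℂ) (hDD : IsDD A) :
    IsHMatrix A ↔
      (TSet A = ∅ ∨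
        (IsHMatrix (subMat A (TSet A)) ∧
          ∀ j ∉ TSet A,
            ‖Matrix.mulVec (CompMat (subMat A (TSet A)))⁻¹
                (fun i : {i // i ∈ TSet A} => rowSumOn A (TSet A)ᶜ i.val)‖ *
              rowSumOn A (TSet A) j <
            ‖A j j‖ - rowSumOn A (TSet A)ᶜ j)) :=
  huang_characterization_general n A hDD

end
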